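/- If A and B are acyclic TFSs and A strictly subsumes B, then rank(A) < rank(B), where rank(C) = |Π(C)| + Θ(C) + Δ(C), with Θ(C) = Σ_{π∈Π(C)} r(θ(δ_C(q̄_C,π))) and Δ(C) = |Π(C)| − |Q_C|. -/

import Mathlib

/-! Typed feature structures (TFSs), following Carpenter 1992.
`pathδ` extends the partial transition function `δ` to paths (lists of features). -/

variable {Nodes Feats Types : Type}

def pathδ (δ : Nodes → Feats → Option Nodes) : Nodes → List Feats → Option Nodes
  | q, [] => some q
  | q, f :: π => (δ q f).bind fun q' => pathδ δ q' π

/-- A typed feature structure: a finite set of nodes `Q`, a root, and a partial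
transition function `δ : Q × Feats ⇀ Q` (modelled as `none` outside its domain,
undefined outside `Q`), with every node reachable from the root. -/
structure TFS (Nodes Feats : Type) where
  Q : Finset Nodes
  root : Nodes
  root_mem : root ∈ Q
  δ : Nodes → Feats → Option Nodes
  dom : ∀ q f, (δ q f).isSome → q ∈ Q
  closed : ∀ q f q', δ q f = some q' → q' ∈ Q
  reach : ∀ q ∈ Q, ∃ π : List Feats, pathδ δ root π = some q

/-- The set of paths defined from the root of `A`. -/
def TFS.Pi (A : TFS Nodes Feats) : Set (List Feats) :=
  {π | (pathδ A.δ A.root π).isSome}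

/-- `A` is cyclic if some node returns to itself along a nonempty path. -/
def TFS.Cyclic (A : TFS Nodes Feats) : Prop :=
  ∃ q ∈ A.Q, ∃ α : List Feats, α ≠ [] ∧ pathδ A.δ q α = some q

def TFS.Acyclic (A : TFS Nodes Feats) : Prop := ¬ A.Cyclic

/-- A subsumption morphism from `A` to `B` w.r.t. the typing function `θ`:
maps root to root, maps `Q_A` into `Q_B`, is monotone on node types,
and commutes with the transition function. -/
def IsMorphism [PartialOrder Types] (θ : Nodes → Types)
    (A B : TFS Nodes Feats) (h : Nodes → Nodes) : Prop :=
  h A.root = B.root ∧ (∀ q ∈ A.Q, h q ∈ B.Q) ∧ (∀ q ∈ A.Q, θ q ≤ θ (h q)) ∧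
  ∀ q f q', A.δ q f = some q' → B.δ (h q) f = some (h q')

/-- `A` subsumes `B` iff some subsumption morphism from `A` to `B` exists. -/
def Subsumes [PartialOrder Types] (θ : Nodes → Types) (A B : TFS Nodes Feats) : Prop :=
  ∃ h, IsMorphism θ A B h

/-- Strict subsumption: `A ⊏ B` iff `A ⊑ B` and not `B ⊑ A`. -/
def StrictlySubsumes [PartialOrder Types] (θ : Nodes → Types) (A B : TFS Nodes Feats) : Prop :=
  Subsumes θ A B ∧ ¬ Subsumes θ B A

/-- `Θ(A)`: the sum over paths of the `r`-rank of the type of the node reached. -/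
noncomputable def Theta (r : Types → ℕ) (θ : Nodes → Types) (A : TFS Nodes Feats) : ℕ :=
  ∑ᶠ π ∈ A.Pi, (pathδ A.δ A.root π).elim 0 fun q => r (θ q)

/-- `rank(A) = |Π(A)| + Θ(A) + Δ(A)` where `Δ(A) = |Π(A)| − |Q_A|` (computed in `ℤ`). -/
noncomputable def rank (r : Types → ℕ) (θ : Nodes → Types) (A : TFS Nodes Feats) : ℤ :=
  (A.Pi.ncard : ℤ) + (Theta r θ A : ℤ) + ((A.Pi.ncard : ℤ) - (A.Q.card : ℤ))

/-! A morphism `h : A → B` decreases none of the three summands of the rank: `Π(A) ⊆ Π(B)`, types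
only grow along `h`, and each path of `Π(B) \ Π(A)` adds at most one node of `B` to `h(Q_A)`. If
the ranks agree, all three summands agree: then `Π(A) = Π(B)`, `h` preserves every type (as `r` is
strictly monotone), and `|Q_A| = |Q_B|` makes `h` a bijection `Q_A → Q_B`, whose inverse is a
morphism `B → A`. Acyclicity makes `Π` finite, since a path of length `≥ |Q|` revisits a node. -/

theorem Finset.card_add_card_image_le_of_subset {α β : Type*} [DecidableEq α] [DecidableEq β]
    {s t : Finset α} (hst : s ⊆ t) (f : α → β) :
    s.card + (t.image f).card ≤ t.card + (s.image f).card := by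
  have hsplit : t.image f = s.image f ∪ (t \ s).image f := by
    rw [← Finset.image_union, Finset.union_sdiff_of_subset hst]
  have hunion := Finset.card_union_le (s.image f) ((t \ s).image f)
  have hdiff := Finset.card_image_le (s := t \ s) (f := f)
  have hcard := Finset.card_sdiff_of_subset hst
  have hle := Finset.card_le_card hst
  rw [hsplit]
  omega

theorem pathδ_append (δ : Nodes → Feats → Option Nodes) (q : Nodes) (π₁ π₂ : List Feats) :
    pathδ δ q (π₁ ++ π₂) = (pathδ δ q π₁).bind fun q' => pathδ δ q' π₂ := by
  induction π₁ generalizing q with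
  | nil => rfl
  | cons f π ih =>
    simp only [List.cons_append, pathδ]
    cases δ q f <;> simp [ih]

theorem pathδ_concat (δ : Nodes → Feats → Option Nodes) (q : Nodes) (π : List Feats) (f : Feats) :
    pathδ δ q (π ++ [f]) = (pathδ δ q π).bind fun q' => δ q' f := by
  rw [pathδ_append]
  congr 1
  funext q'
  cases hf : δ q' f <;> simp [pathδ, hf]

theorem pathδ_take_isSome {δ : Nodes → Feats → Option Nodes} {q : Nodes} {π : List Feats}
    (hπ : (pathδ δ q π).isSome) (i : ℕ) : (pathδ δ q (π.take i)).isSome := by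
  rw [← List.take_append_drop i π, pathδ_append] at hπ
  cases hi : pathδ δ q (π.take i) <;> simp_all

namespace TFS

variable (A : TFS Nodes Feats)

theorem mem_Q_of_pathδ {q q' : Nodes} {π : List Feats} (hq : q ∈ A.Q)
    (hπ : pathδ A.δ q π = some q') : q' ∈ A.Q := by
  induction π generalizing q with
  | nil => exact Option.some_injective _ hπ ▸ hq
  | cons f π ih =>
    obtain ⟨q'', hf, hπ⟩ := Option.bind_eq_some_iff.mp hπ
    exact ih (A.closed q f q'' hf) hπ

theorem Acyclic.length_lt_card {A : TFS Nodes Feats} (hA : A.Acyclic) {q : Nodes}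
    {π : List Feats} (hq : q ∈ A.Q) (hπ : (pathδ A.δ q π).isSome) : π.length < A.Q.card := by
  classical
  by_contra! hlen
  choose node hnode using fun i => Option.isSome_iff_exists.mp (pathδ_take_isSome hπ i)
  obtain ⟨i, hi, j, hj, hij, hnode_eq⟩ :=
    Finset.exists_ne_map_eq_of_card_lt_of_maps_to (s := Finset.range (π.length + 1))
      (t := A.Q) (by rw [Finset.card_range]; omega) fun i _ => A.mem_Q_of_pathδ hq (hnode i)
  rw [Finset.mem_range] at hi hj
  wlog hlt : i < j generalizing i j
  · exact this j hj i hi hij.symm hnode_eq.symm (by omega)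
  obtain ⟨α, hα⟩ := List.take_prefix_take_left (l := π) hlt.le
  have hα_ne : α ≠ [] := by
    rintro rfl
    have := congrArg List.length hα
    simp only [List.append_nil, List.length_take] at this
    omega
  have hcycle := hnode j
  rw [← hα, pathδ_append, hnode i, Option.bind_some, ← hnode_eq] at hcycle
  exact hA ⟨node i, A.mem_Q_of_pathδ hq (hnode i), α, hα_ne, hcycle⟩

theorem Acyclic.finite_Pi [Finite Feats] {A : TFS Nodes Feats} (hA : A.Acyclic) : A.Pi.Finite :=
  (List.finite_length_lt Feats A.Q.card).subset fun _ hπ => hA.length_lt_card A.root_mem hπ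

/-- The node `δ_A(q̄_A, π)` reached from the root along `π`, or the root if `π ∉ Π(A)`. -/
def node (π : List Feats) : Nodes := (pathδ A.δ A.root π).getD A.root

variable {A}

theorem pathδ_root_eq_node {π : List Feats} (hπ : π ∈ A.Pi) :
    pathδ A.δ A.root π = some (A.node π) := by
  obtain ⟨q, hq⟩ := Option.isSome_iff_exists.mp hπ
  simp [node, hq]

theorem node_eq_of_pathδ {π : List Feats} {q : Nodes} (hπ : pathδ A.δ A.root π = some q) :
    π ∈ A.Pi ∧ A.node π = q := by
  simp [TFS.Pi, node, hπ]

theorem node_mem_Q {π : List Feats} (hπ : π ∈ A.Pi) : A.node π ∈ A.Q :=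
  A.mem_Q_of_pathδ A.root_mem (pathδ_root_eq_node hπ)

theorem exists_node_eq {q : Nodes} (hq : q ∈ A.Q) : ∃ π ∈ A.Pi, A.node π = q := by
  obtain ⟨π, hπ⟩ := A.reach q hq
  exact ⟨π, node_eq_of_pathδ hπ⟩

theorem δ_node {π : List Feats} {f : Feats} (hπf : π ++ [f] ∈ A.Pi) :
    A.δ (A.node π) f = some (A.node (π ++ [f])) := by
  have hπ : π ∈ A.Pi := by
    show (pathδ A.δ A.root π).isSome
    simpa using pathδ_take_isSome hπf π.length
  have h := pathδ_root_eq_node hπf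
  rwa [pathδ_concat, pathδ_root_eq_node hπ, Option.bind_some] at h

theorem image_node (hA : A.Pi.Finite) [DecidableEq Nodes] : hA.toFinset.image A.node = A.Q := by
  ext q
  simp only [Finset.mem_image, Set.Finite.mem_toFinset]
  exact ⟨fun ⟨_, hπ, hq⟩ => hq ▸ node_mem_Q hπ, exists_node_eq⟩

theorem Theta_eq_sum (r : Types → ℕ) (θ : Nodes → Types) (hA : A.Pi.Finite) :
    Theta r θ A = ∑ π ∈ hA.toFinset, r (θ (A.node π)) := by
  rw [Theta, finsum_mem_eq_finite_toFinset_sum _ hA]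
  refine Finset.sum_congr rfl fun π hπ => ?_
  rw [pathδ_root_eq_node (hA.mem_toFinset.mp hπ)]
  rfl

end TFS

namespace IsMorphism

variable [PartialOrder Types] {θ : Nodes → Types} {A B : TFS Nodes Feats} {h : Nodes → Nodes}

theorem pathδ_eq_some (hm : IsMorphism θ A B h) {q q' : Nodes} {π : List Feats}
    (hπ : pathδ A.δ q π = some q') : pathδ B.δ (h q) π = some (h q') := by
  induction π generalizing q with
  | nil => exact congrArg (some ∘ h) (Option.some_injective _ hπ)
  | cons f π ih =>
    obtain ⟨q'', hf, hπ⟩ := Option.bind_eq_some_iff.mp hπ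
    simp only [pathδ, hm.2.2.2 q f q'' hf, Option.bind_some]
    exact ih hπ

theorem node_eq (hm : IsMorphism θ A B h) {π : List Feats} (hπ : π ∈ A.Pi) :
    π ∈ B.Pi ∧ B.node π = h (A.node π) := by
  have hB := hm.pathδ_eq_some (TFS.pathδ_root_eq_node hπ)
  rw [hm.1] at hB
  exact TFS.node_eq_of_pathδ hB

theorem Pi_subset (hm : IsMorphism θ A B h) : A.Pi ⊆ B.Pi := fun _ hπ => (hm.node_eq hπ).1

theorem type_node_le (hm : IsMorphism θ A B h) {π : List Feats} (hπ : π ∈ A.Pi) :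
    θ (A.node π) ≤ θ (B.node π) :=
  (hm.node_eq hπ).2 ▸ hm.2.2.1 _ (TFS.node_mem_Q hπ)

theorem card_Pi_add_card_Q_le (hm : IsMorphism θ A B h) (hA : A.Pi.Finite) (hB : B.Pi.Finite) :
    A.Pi.ncard + B.Q.card ≤ B.Pi.ncard + A.Q.card := by
  classical
  have hsub : hA.toFinset ⊆ hB.toFinset := Set.Finite.toFinset_subset_toFinset.mpr hm.Pi_subset
  have himage : hA.toFinset.image B.node = A.Q.image h := by
    rw [← TFS.image_node hA, Finset.image_image]
    exact Finset.image_congr fun π hπ => (hm.node_eq (hA.mem_toFinset.mp hπ)).2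
  have hsplit := Finset.card_add_card_image_le_of_subset hsub B.node
  rw [TFS.image_node hB, himage] at hsplit
  rw [Set.ncard_eq_toFinset_card _ hA, Set.ncard_eq_toFinset_card _ hB]
  have himage_le := Finset.card_image_le (s := A.Q) (f := h)
  omega

theorem Theta_le_sum_node {r : Types → ℕ} (hm : IsMorphism θ A B h) (hA : A.Pi.Finite)
    (hr : Monotone r) :
    Theta r θ A ≤ ∑ π ∈ hA.toFinset, r (θ (B.node π)) :=
  (TFS.Theta_eq_sum r θ hA).trans_le <| Finset.sum_le_sum fun _ hπ =>
    hr (hm.type_node_le (hA.mem_toFinset.mp hπ))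

theorem sum_node_le_Theta {r : Types → ℕ} (hm : IsMorphism θ A B h) (hA : A.Pi.Finite)
    (hB : B.Pi.Finite) : ∑ π ∈ hA.toFinset, r (θ (B.node π)) ≤ Theta r θ B :=
  (TFS.Theta_eq_sum r θ hB).symm ▸ Finset.sum_le_sum_of_subset
    (Set.Finite.toFinset_subset_toFinset.mpr hm.Pi_subset)

theorem Theta_le {r : Types → ℕ} (hm : IsMorphism θ A B h) (hA : A.Pi.Finite)
    (hB : B.Pi.Finite) (hr : Monotone r) : Theta r θ A ≤ Theta r θ B :=
  (hm.Theta_le_sum_node hA hr).trans (hm.sum_node_le_Theta hA hB)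

theorem type_eq_of_Theta_eq {r : Types → ℕ} (hm : IsMorphism θ A B h) (hA : A.Pi.Finite)
    (hB : B.Pi.Finite) (hr : StrictMono r) (hΘ : Theta r θ A = Theta r θ B) :
    ∀ q ∈ A.Q, θ (h q) = θ q := by
  intro q hq
  obtain ⟨π, hπ, rfl⟩ := TFS.exists_node_eq hq
  have hsum := le_antisymm (hm.Theta_le_sum_node hA hr.monotone)
    (hΘ ▸ hm.sum_node_le_Theta hA hB)
  rw [TFS.Theta_eq_sum r θ hA, Finset.sum_eq_sum_iff_of_le fun _ hπ' =>
    hr.monotone (hm.type_node_le (hA.mem_toFinset.mp hπ'))] at hsum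
  have hr_eq := hsum π (hA.mem_toFinset.mpr hπ)
  rw [← (hm.node_eq hπ).2]
  exact ((hm.type_node_le hπ).eq_or_lt.resolve_right fun hlt => (hr hlt).ne hr_eq).symm

theorem image_Q_eq (hm : IsMorphism θ A B h) (hPi : B.Pi ⊆ A.Pi) [DecidableEq Nodes] :
    A.Q.image h = B.Q := by
  ext q
  rw [Finset.mem_image]
  refine ⟨fun ⟨a, ha, hq⟩ => hq ▸ hm.2.1 a ha, fun hq => ?_⟩
  obtain ⟨π, hπ, rfl⟩ := TFS.exists_node_eq hq
  exact ⟨A.node π, TFS.node_mem_Q (hPi hπ), (hm.node_eq (hPi hπ)).2.symm⟩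

theorem subsumes_of_injOn (hm : IsMorphism θ A B h) (hPi : B.Pi ⊆ A.Pi)
    (hθ : ∀ q ∈ A.Q, θ (h q) = θ q) (hinj : Set.InjOn h A.Q) : Subsumes θ B A := by
  have : Nonempty Nodes := ⟨A.root⟩
  have hinv : ∀ a ∈ A.Q, Function.invFunOn h A.Q (h a) = a :=
    fun a ha => hinj.leftInvOn_invFunOn ha
  have hsurj : ∀ q ∈ B.Q, ∃ π ∈ A.Pi, h (A.node π) = q := fun q hq => by
    obtain ⟨π, hπ, rfl⟩ := TFS.exists_node_eq hq
    exact ⟨π, hPi hπ, (hm.node_eq (hPi hπ)).2.symm⟩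
  refine ⟨Function.invFunOn h A.Q, ?_, ?_, ?_, ?_⟩
  · rw [← hm.1, hinv _ A.root_mem]
  · intro q hq
    obtain ⟨π, hπ, rfl⟩ := hsurj q hq
    rw [hinv _ (TFS.node_mem_Q hπ)]
    exact TFS.node_mem_Q hπ
  · intro q hq
    obtain ⟨π, hπ, rfl⟩ := hsurj q hq
    rw [hinv _ (TFS.node_mem_Q hπ), hθ _ (TFS.node_mem_Q hπ)]
  · intro q f q' hδ
    obtain ⟨π, hπ, rfl⟩ := hsurj q (B.dom q f (by simp [hδ]))
    have hBπf : pathδ B.δ B.root (π ++ [f]) = some q' := by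
      rw [pathδ_concat, TFS.pathδ_root_eq_node (hm.Pi_subset hπ), (hm.node_eq hπ).2,
        Option.bind_some, hδ]
    obtain ⟨hπf, rfl⟩ := TFS.node_eq_of_pathδ hBπf
    rw [(hm.node_eq (hPi hπf)).2, hinv _ (TFS.node_mem_Q hπ), hinv _ (TFS.node_mem_Q (hPi hπf))]
    exact TFS.δ_node (hPi hπf)

end IsMorphism

/-- If `A` and `B` are acyclic and `A ⊏ B`, then `rank(A) < rank(B)`. -/
theorem rank_strict_mono [Finite Feats] [PartialOrder Types]
    (r : Types → ℕ) (hr : ∀ t t' : Types, t < t' → r t < r t')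
    (θ : Nodes → Types) (A B : TFS Nodes Feats)
    (hA : A.Acyclic) (hB : B.Acyclic) (hs : StrictlySubsumes θ A B) :
    rank r θ A < rank r θ B := by
  classical
  obtain ⟨⟨h, hm⟩, hBA⟩ := hs
  have hr_mono : StrictMono r := fun _ _ => hr _ _
  have hAfin := hA.finite_Pi
  have hBfin := hB.finite_Pi
  have hPi := Set.ncard_le_ncard hm.Pi_subset hBfin
  have hΘ := hm.Theta_le hAfin hBfin hr_mono.monotone
  have hΔ := hm.card_Pi_add_card_Q_le hAfin hBfin
  refine lt_of_le_of_ne (by unfold rank; omega) fun hrank => hBA ?_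
  unfold rank at hrank
  have hPi_eq : A.Pi = B.Pi := Set.eq_of_subset_of_ncard_le hm.Pi_subset (by omega) hBfin
  have hQ : (A.Q.image h).card = A.Q.card := by
    rw [hm.image_Q_eq hPi_eq.ge]
    omega
  exact hm.subsumes_of_injOn hPi_eq.ge (hm.type_eq_of_Theta_eq hAfin hBfin hr_mono (by omega))
    (Finset.injOn_of_card_image_eq hQ)
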